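/- Let Γ > 0, E_r ∈ ℝ, and let μ be the Cauchy probability measure on ℝ with density (1/π)·Γ/((x − E_r)² + Γ²). Then for every λ ∈ ℝ the energy width ΔE(λ) := inf{ε ∈ (0,∞) : ∫_ℝ 2ε²/((x−λ)² + ε²) dμ(x) ≥ 1} equals √(Γ² + (λ − E_r)²); in particular ΔE(λ) is minimal exactly at λ = E_r, where it equals Γ, the half-width at half-maximum of the Lorentzian distribution. -/

import Mathlib

open MeasureTheory
open scoped ENNReal

/-- The Cauchy (Lorentzian) probability measure centred at `E_r` with half-width `Γ`,
i.e. the measure with density `x ↦ (1/π)·Γ/((x − E_r)² + Γ²)` w.r.t. Lebesgue measure. -/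
noncomputable def cauchyMeasure (Er Γ : ℝ) : Measure ℝ :=
  volume.withDensity fun x => ENNReal.ofReal ((1 / Real.pi) * Γ / ((x - Er) ^ 2 + Γ ^ 2))

/-- The energy width at `λ` of the measure `μ`:
`ΔE(λ) = inf{ε ∈ (0,∞) : ∫ 2ε²/((x−λ)² + ε²) dμ(x) ≥ 1}`. -/
noncomputable def energyWidthMeasure (μ : Measure ℝ) (lam : ℝ) : ℝ :=
  sInf {ε : ℝ | 0 < ε ∧ 1 ≤ ∫ x, 2 * ε ^ 2 / ((x - lam) ^ 2 + ε ^ 2) ∂μ}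

/-!
The integrand `2ε²/((x − λ)² + ε²)` is `2πε` times the Cauchy density of scale `ε` at `λ`, and
Cauchy densities convolve by adding locations and scales. Hence the integral against the Cauchy
measure of scale `Γ` at `E_r` is `2ε(ε + Γ)/((λ − E_r)² + (ε + Γ)²)`, which is `≥ 1` exactly when
`ε² ≥ Γ² + (λ − E_r)²`. The convolution integral is computed from a partial-fraction primitive
made of logarithms and arctangents; this breaks down only when the two densities coincide,
i.e. at the single point `(λ, ε) = (E_r, Γ)`, which does not affect the infimum.
-/

open Filter Real Topology Bornology

theorem hasDerivAt_arctan_sub_div_div (a : ℝ) {b : ℝ} (hb : b ≠ 0) (x : ℝ) :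
    HasDerivAt (fun x => arctan ((x - a) / b) / b) ((x - a) ^ 2 + b ^ 2)⁻¹ x := by
  refine ((((hasDerivAt_id' x).sub_const a).div_const b).arctan.div_const b).congr_deriv ?_
  field_simp
  ring

theorem hasDerivAt_log_sub_sq_add_sq (a : ℝ) {b : ℝ} (hb : b ≠ 0) (x : ℝ) :
    HasDerivAt (fun x => log ((x - a) ^ 2 + b ^ 2)) (2 * (x - a) / ((x - a) ^ 2 + b ^ 2)) x := by
  have hP : (x - a) ^ 2 + b ^ 2 ≠ 0 := by positivity
  refine ((((hasDerivAt_id' x).sub_const a).pow 2).add_const (b ^ 2)).log hP |>.congr_deriv ?_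
  simp only [Pi.pow_apply]
  ring

theorem tendsto_arctan_sub_div_atTop (a : ℝ) {b : ℝ} (hb : 0 < b) :
    Tendsto (fun x => arctan ((x - a) / b)) atTop (𝓝 (π / 2)) :=
  tendsto_nhds_of_tendsto_nhdsWithin tendsto_arctan_atTop |>.comp <|
    (tendsto_atTop_add_const_right _ (-a) tendsto_id).atTop_div_const hb

theorem tendsto_arctan_sub_div_atBot (a : ℝ) {b : ℝ} (hb : 0 < b) :
    Tendsto (fun x => arctan ((x - a) / b)) atBot (𝓝 (-(π / 2))) :=
  tendsto_nhds_of_tendsto_nhdsWithin tendsto_arctan_atBot |>.comp <|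
    (tendsto_atBot_add_const_right _ (-a) tendsto_id).atBot_div_const hb

theorem tendsto_log_sq_add_sq_sub_log_sq (a b : ℝ) :
    Tendsto (fun x => log ((x - a) ^ 2 + b ^ 2) - log (x ^ 2)) (cobounded ℝ) (𝓝 0) := by
  have hcont : ContinuousAt (fun t : ℝ => log ((1 - a * t) ^ 2 + (b * t) ^ 2)) 0 :=
    (continuousAt_log (by simp)).comp (by fun_prop)
  have h := hcont.tendsto.comp tendsto_inv₀_cobounded
  simp only [mul_zero, sub_zero, zero_pow two_ne_zero, add_zero, one_pow, log_one] at h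
  refine h.congr' ?_
  filter_upwards [eventually_ne_cobounded (0 : ℝ), eventually_ne_cobounded a] with x hx hxa
  have hxa' : (x - a) ^ 2 + b ^ 2 ≠ 0 := by
    have : (x - a) ^ 2 ≠ 0 := pow_ne_zero 2 (sub_ne_zero.2 hxa)
    positivity
  rw [Function.comp_apply, ← log_div hxa' (pow_ne_zero 2 hx)]
  congr 1
  field_simp

theorem integrable_inv_sub_sq_add_sq (c : ℝ) {d : ℝ} (hd : d ≠ 0) :
    Integrable fun x : ℝ => ((x - c) ^ 2 + d ^ 2)⁻¹ := by
  have h := ((integrable_inv_one_add_sq.comp_div hd).comp_sub_right c).const_mul (d ^ 2)⁻¹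
  refine h.congr (ae_of_all _ fun x => ?_)
  field_simp
  ring

theorem integrable_inv_sub_sq_add_sq_mul (a c : ℝ) {b d : ℝ} (hb : b ≠ 0) (hd : d ≠ 0) :
    Integrable fun x : ℝ => (((x - a) ^ 2 + b ^ 2) * ((x - c) ^ 2 + d ^ 2))⁻¹ := by
  refine ((integrable_inv_sub_sq_add_sq c hd).const_mul (b ^ 2)⁻¹).mono'
    (by fun_prop (disch := intro x; positivity)) (ae_of_all _ fun x => ?_)
  rw [Real.norm_of_nonneg (by positivity), mul_inv]
  gcongr
  nlinarith [sq_nonneg (x - a)]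

theorem integral_inv_sub_sq_add_sq_mul {a b c d : ℝ} (hb : 0 < b) (hd : 0 < d)
    (hne : (a, b) ≠ (c, d)) :
    ∫ x : ℝ, (((x - a) ^ 2 + b ^ 2) * ((x - c) ^ 2 + d ^ 2))⁻¹
      = π * (b + d) / (b * d * ((c - a) ^ 2 + (b + d) ^ 2)) := by
  have hQ₁ : (c - a) ^ 2 + (b + d) ^ 2 ≠ 0 := by positivity
  have hQ₂ : (c - a) ^ 2 + (b - d) ^ 2 ≠ 0 := by
    contrapose! hne
    have hca : c - a = 0 := by nlinarith [sq_nonneg (c - a), sq_nonneg (b - d)]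
    have hbd : b - d = 0 := by nlinarith [sq_nonneg (c - a), sq_nonneg (b - d)]
    rw [sub_eq_zero.1 hca, sub_eq_zero.1 hbd]
  let Q := ((c - a) ^ 2 + (b + d) ^ 2) * ((c - a) ^ 2 + (b - d) ^ 2)
  -- partial fractions: `1 / (P₁ P₂) = (A (x - a) + B) / P₁ + (D - A (x - c)) / P₂`
  -- for `P₁ = (x - a)² + b²`, `P₂ = (x - c)² + d²`
  let A := 2 * (c - a) / Q
  let B := ((c - a) ^ 2 + d ^ 2 - b ^ 2) / Q
  let D := ((c - a) ^ 2 + b ^ 2 - d ^ 2) / Q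
  let F : ℝ → ℝ := fun x => A / 2 * (log ((x - a) ^ 2 + b ^ 2) - log ((x - c) ^ 2 + d ^ 2))
    + B * (arctan ((x - a) / b) / b) + D * (arctan ((x - c) / d) / d)
  have hF : ∀ x, HasDerivAt F (((x - a) ^ 2 + b ^ 2) * ((x - c) ^ 2 + d ^ 2))⁻¹ x := by
    intro x
    refine ((((hasDerivAt_log_sub_sq_add_sq a hb.ne' x).sub
      (hasDerivAt_log_sub_sq_add_sq c hd.ne' x)).const_mul (A / 2)).add
      ((hasDerivAt_arctan_sub_div_div a hb.ne' x).const_mul B)).add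
      ((hasDerivAt_arctan_sub_div_div c hd.ne' x).const_mul D) |>.congr_deriv ?_
    have : (x - a) ^ 2 + b ^ 2 ≠ 0 := by positivity
    have : (x - c) ^ 2 + d ^ 2 ≠ 0 := by positivity
    simp only [A, B, D, Q]
    field_simp
    ring
  have hlog : Tendsto (fun x => log ((x - a) ^ 2 + b ^ 2) - log ((x - c) ^ 2 + d ^ 2))
      (cobounded ℝ) (𝓝 0) := by
    simpa using (tendsto_log_sq_add_sq_sub_log_sq a b).sub (tendsto_log_sq_add_sq_sub_log_sq c d)
  have hTop : Tendsto F atTop (𝓝 (A / 2 * 0 + B * (π / 2 / b) + D * (π / 2 / d))) :=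
    (((hlog.mono_left IsOrderBornology.atTop_le_cobounded).const_mul _).add
      (((tendsto_arctan_sub_div_atTop a hb).div_const b).const_mul B)).add
      (((tendsto_arctan_sub_div_atTop c hd).div_const d).const_mul D)
  have hBot : Tendsto F atBot (𝓝 (A / 2 * 0 + B * (-(π / 2) / b) + D * (-(π / 2) / d))) :=
    (((hlog.mono_left IsOrderBornology.atBot_le_cobounded).const_mul _).add
      (((tendsto_arctan_sub_div_atBot a hb).div_const b).const_mul B)).add
      (((tendsto_arctan_sub_div_atBot c hd).div_const d).const_mul D)
  rw [integral_of_hasDerivAt_of_tendsto hF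
    (integrable_inv_sub_sq_add_sq_mul a c hb.ne' hd.ne') hBot hTop]
  simp only [B, D, Q]
  field_simp
  ring

theorem integral_cauchyMeasure (Er : ℝ) {Γ : ℝ} (hΓ : 0 ≤ Γ) (g : ℝ → ℝ) :
    ∫ x, g x ∂cauchyMeasure Er Γ = ∫ x, 1 / π * Γ / ((x - Er) ^ 2 + Γ ^ 2) * g x := by
  rw [cauchyMeasure, integral_withDensity_eq_integral_toReal_smul (by fun_prop)
    (ae_of_all _ fun _ => ENNReal.ofReal_lt_top)]
  congr 1 with x
  rw [ENNReal.toReal_ofReal (by positivity), smul_eq_mul]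

theorem integral_lorentzian_cauchyMeasure {Er Γ lam ε : ℝ} (hΓ : 0 < Γ) (hε : 0 < ε)
    (hne : (lam, ε) ≠ (Er, Γ)) :
    ∫ x, 2 * ε ^ 2 / ((x - lam) ^ 2 + ε ^ 2) ∂cauchyMeasure Er Γ
      = 2 * ε * (ε + Γ) / ((lam - Er) ^ 2 + (ε + Γ) ^ 2) := by
  have hprod : ∀ x : ℝ, 1 / π * Γ / ((x - Er) ^ 2 + Γ ^ 2) * (2 * ε ^ 2 / ((x - lam) ^ 2 + ε ^ 2))
      = 2 * ε ^ 2 * Γ / π * (((x - lam) ^ 2 + ε ^ 2) * ((x - Er) ^ 2 + Γ ^ 2))⁻¹ := by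
    intro x
    field_simp
  simp only [integral_cauchyMeasure Er hΓ.le, hprod, integral_const_mul,
    integral_inv_sub_sq_add_sq_mul hε hΓ hne]
  field_simp
  ring

theorem csInf_eq_of_Ioi_subset_of_subset_Ici {α : Type*} [ConditionallyCompleteLinearOrder α]
    [DenselyOrdered α] [NoMaxOrder α] {S : Set α} {s : α} (hIoi : Set.Ioi s ⊆ S)
    (hIci : S ⊆ Set.Ici s) : sInf S = s :=
  le_antisymm (csInf_Ioi (a := s) ▸ csInf_le_csInf ⟨s, hIci⟩ Set.nonempty_Ioi hIoi)
    (le_csInf (Set.nonempty_Ioi.mono hIoi) hIci)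

theorem energyWidthMeasure_cauchyMeasure {Γ : ℝ} (Er : ℝ) (hΓ : 0 < Γ) (lam : ℝ) :
    energyWidthMeasure (cauchyMeasure Er Γ) lam = √(Γ ^ 2 + (lam - Er) ^ 2) := by
  set s := √(Γ ^ 2 + (lam - Er) ^ 2)
  have hs : 0 < s := by positivity
  -- the closed form fails only at `(lam, ε) = (Er, Γ)`, where `ε = s`
  have hmem : ∀ ε, 0 < ε → ε ≠ s →
      (1 ≤ ∫ x, 2 * ε ^ 2 / ((x - lam) ^ 2 + ε ^ 2) ∂cauchyMeasure Er Γ ↔ s ≤ ε) := by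
    intro ε hε hεs
    have hne : (lam, ε) ≠ (Er, Γ) := by
      rintro ⟨⟩
      simp [s, sqrt_sq hΓ.le] at hεs
    rw [integral_lorentzian_cauchyMeasure hΓ hε hne, one_le_div (by positivity),
      Real.sqrt_le_left hε.le]
    constructor <;> intro h <;> nlinarith
  refine csInf_eq_of_Ioi_subset_of_subset_Ici (fun ε (hε : s < ε) => ?_) fun ε hε => ?_
  · exact ⟨hs.trans hε, (hmem ε (hs.trans hε) hε.ne').2 hε.le⟩
  · by_contra hlt
    exact hlt ((hmem ε hε.1 (ne_of_lt (not_le.1 hlt))).1 hε.2)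

/-- For the Cauchy measure with density `(1/π)·Γ/((x−E_r)² + Γ²)`
(`Γ > 0`), the energy width at every `λ` equals `√(Γ² + (λ − E_r)²)`; in particular it is
minimal exactly at `λ = E_r`, where it equals `Γ`, the half-width at half-maximum. -/
theorem energyWidth_cauchyMeasure (Γ Er : ℝ) (hΓ : 0 < Γ) :
    (∀ lam : ℝ, energyWidthMeasure (cauchyMeasure Er Γ) lam
        = Real.sqrt (Γ ^ 2 + (lam - Er) ^ 2)) ∧
    energyWidthMeasure (cauchyMeasure Er Γ) Er = Γ ∧
    ∀ lam : ℝ, lam ≠ Er →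
      energyWidthMeasure (cauchyMeasure Er Γ) Er
        < energyWidthMeasure (cauchyMeasure Er Γ) lam := by
  have hwidth := energyWidthMeasure_cauchyMeasure Er hΓ
  have hcentre : energyWidthMeasure (cauchyMeasure Er Γ) Er = Γ := by
    rw [hwidth, sub_self, zero_pow two_ne_zero, add_zero, sqrt_sq hΓ.le]
  refine ⟨hwidth, hcentre, fun lam hlam => ?_⟩
  have hshift : lam - Er ≠ 0 := sub_ne_zero.2 hlam
  rw [hcentre, hwidth, lt_sqrt hΓ.le]
  exact lt_add_of_pos_right _ (by positivity)
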